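/- Let f : A → B be a surjective homomorphism of commutative rings with kernel I, let g : C → B be any ring homomorphism, and set P = A ×_B C (the fiber product along f and g, with projections π_A, π_C). Then the map A ⊗_P C → B sending a ⊗ c to f(a)·g(c) is a ring isomorphism; in particular A ⊗_P C ≅ A/I. -/
import Mathlib


open TensorProduct

/-- The fiber product `A ×_B C` along ring homomorphisms `f : A → B` and `g : C → B`. -/
def fiberProduct {A B C : Type*} [CommRing A] [CommRing B] [CommRing C]
    (f : A →+* B) (g : C →+* B) : Subring (A × C) where
  carrier := {p | f p.1 = g p.2}
  mul_mem' := by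
    intro p q hp hq
    simp only [Set.mem_setOf_eq, Prod.fst_mul, Prod.snd_mul, map_mul] at *
    rw [hp, hq]
  one_mem' := by
    simp only [Set.mem_setOf_eq, Prod.fst_one, Prod.snd_one, map_one]
  add_mem' := by
    intro p q hp hq
    simp only [Set.mem_setOf_eq, Prod.fst_add, Prod.snd_add, map_add] at *
    rw [hp, hq]
  zero_mem' := by
    simp only [Set.mem_setOf_eq, Prod.fst_zero, Prod.snd_zero, map_zero]
  neg_mem' := by
    intro p hp
    simp only [Set.mem_setOf_eq, Prod.fst_neg, Prod.snd_neg, map_neg] at *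
    rw [hp]

set_option synthInstance.maxHeartbeats 1000000
set_option maxHeartbeats 2000000

/-- Let `f : A → B` be a surjective ring homomorphism with kernel `I`, `g : C → B` any
ring homomorphism, and `P = A ×_B C` the fiber product, with `A` and `C` viewed as
`P`-algebras via the projections. Then `a ⊗ c ↦ f a * g c` defines a ring isomorphism
`A ⊗[P] C ≃ B`; in particular `A ⊗[P] C ≅ A / I`. -/
theorem tensor_over_fiberProduct {A B C : Type*} [CommRing A] [CommRing B] [CommRing C]
    (f : A →+* B) (g : C →+* B) (hf : Function.Surjective f) :
    let P := fiberProduct f g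
    let _ : Algebra P A := ((RingHom.fst A C).comp P.subtype).toAlgebra
    let _ : Algebra P C := ((RingHom.snd A C).comp P.subtype).toAlgebra
    ∃ e : (A ⊗[P] C) ≃+* B,
      (∀ (a : A) (c : C), e (a ⊗ₜ[P] c) = f a * g c) ∧
      Nonempty ((A ⊗[P] C) ≃+* (A ⧸ RingHom.ker f)) := by
  intro P _ _
  letI : Algebra P B := (f.comp ((RingHom.fst A C).comp P.subtype)).toAlgebra
  have algA : ∀ p : P, algebraMap P A p = (p : A × C).1 := fun p => rfl
  have algC : ∀ p : P, algebraMap P C p = (p : A × C).2 := fun p => rfl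
  have algB : ∀ p : P, algebraMap P B p = f (p : A × C).1 := fun p => rfl
  let fAlg : A →ₐ[P] B := { f with commutes' := fun p => rfl }
  let gAlg : C →ₐ[P] B :=
    { g with commutes' := fun p => p.2.symm }
  let φ : (A ⊗[P] C) →ₐ[P] B := Algebra.TensorProduct.productMap fAlg gAlg
  have hφ : ∀ (a : A) (c : C), φ (a ⊗ₜ[P] c) = f a * g c := fun a c =>
    Algebra.TensorProduct.productMap_apply_tmul fAlg gAlg a c
  -- every element is a pure tensor a ⊗ 1
  have key : ∀ x : A ⊗[P] C, ∃ a : A, x = a ⊗ₜ[P] (1 : C) := by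
    intro x
    induction x with
    | zero => exact ⟨0, by simp⟩
    | tmul a c =>
        obtain ⟨a', ha'⟩ := hf (g c)
        refine ⟨a * a', ?_⟩
        have hp : ((a', c) : A × C) ∈ P := ha'
        have : a ⊗ₜ[P] c = (⟨(a', c), hp⟩ : P) • (a ⊗ₜ[P] (1 : C)) := by
          rw [TensorProduct.smul_tmul', TensorProduct.smul_tmul, Algebra.smul_def, algC, mul_one]
        rw [this, TensorProduct.smul_tmul', Algebra.smul_def, algA, mul_comm]
    | add x y hx hy =>
        obtain ⟨a, ha⟩ := hx
        obtain ⟨b, hb⟩ := hy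
        exact ⟨a + b, by rw [ha, hb, TensorProduct.add_tmul]⟩
  have hsurj : Function.Surjective φ := by
    intro b
    obtain ⟨a, ha⟩ := hf b
    exact ⟨a ⊗ₜ[P] 1, by rw [hφ, map_one, mul_one, ha]⟩
  have hinj : Function.Injective φ := by
    rw [injective_iff_map_eq_zero]
    intro x hx
    obtain ⟨a, rfl⟩ := key x
    rw [hφ, map_one, mul_one] at hx
    have hp : ((a, 0) : A × C) ∈ P := by
      show f a = g 0
      rw [hx, map_zero]
    have : a ⊗ₜ[P] (1 : C) = (1 : A) ⊗ₜ[P] ((⟨(a, 0), hp⟩ : P) • (1 : C)) := by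
      rw [← TensorProduct.smul_tmul, Algebra.smul_def, algA, mul_one]
    rw [this, Algebra.smul_def, algC, mul_one, TensorProduct.tmul_zero]
  let e : (A ⊗[P] C) ≃+* B := RingEquiv.ofBijective (φ : (A ⊗[P] C) →+* B) ⟨hinj, hsurj⟩
  refine ⟨e, hφ, ⟨e.trans (RingHom.quotientKerEquivOfSurjective hf).symm⟩⟩
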